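/- With the same assumptions (consistency, conditional ignorability given covariates X, and positivity P(A = \underline{a} | X) ≥ b > 0), the inverse-propensity-weighted identity holds: E[ (1{A = \underline{a}} / P(A = \underline{a} | X)) · Y ] = E[Y(\underline{a})]. -/

import Mathlib

open MeasureTheory

/-- IPW identity: under consistency (`Y = Ya` on `T = {A = a}`), conditional ignorability
given the covariate σ-algebra `m`, and positivity (`P(T | m) ≥ b > 0` a.s.),
`E[ (1_T / P(T | m)) · Y ] = E[Ya]`. -/
theorem stmt2 {Ω : Type*} (m : MeasurableSpace Ω) {mΩ : MeasurableSpace Ω} (μ : Measure Ω) [IsProbabilityMeasure μ]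
    (hm : m ≤ mΩ)
    (T : Set Ω) (hT : MeasurableSet T)
    (Ya Y : Ω → ℝ) (hYa : Integrable Ya μ) (hY : Integrable Y μ)
    (hcons : ∀ ω ∈ T, Y ω = Ya ω)
    (hig : μ[T.indicator Ya | m]
      =ᵐ[μ] fun ω => ((μ[Ya | m]) ω) * ((μ[T.indicator (fun _ => (1 : ℝ)) | m]) ω))
    (b : ℝ) (hb : 0 < b)
    (hpos : ∀ᵐ ω ∂μ, b ≤ (μ[T.indicator (fun _ => (1 : ℝ)) | m]) ω) :
    ∫ ω, (T.indicator (fun _ => (1 : ℝ)) ω / (μ[T.indicator (fun _ => (1 : ℝ)) | m]) ω) * Y ω ∂μ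
      = ∫ ω, Ya ω ∂μ := by
  haveI : SigmaFinite (μ.trim hm) := by
    have : IsFiniteMeasure (μ.trim hm) := isFiniteMeasure_trim hm
    infer_instance
  set W : Ω → ℝ := μ[T.indicator (fun _ => (1 : ℝ)) | m] with hW
  set f : Ω → ℝ := fun ω => (W ω)⁻¹ with hf
  set g : Ω → ℝ := T.indicator Ya with hg
  -- integrability pieces
  have hT2 : MeasurableSet[mΩ] T := hT
  have hg_int : Integrable g μ := hYa.indicator hT2
  have hW_meas : Measurable[m] W := stronglyMeasurable_condExp.measurable
  have hW_inv_meas : Measurable[m] f := hW_meas.inv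
  have hf_meas : StronglyMeasurable[m] f := hW_inv_meas.stronglyMeasurable
  have hf_bdd : ∀ᵐ ω ∂μ, ‖f ω‖ ≤ b⁻¹ := by
    filter_upwards [hpos] with ω hω
    rw [Real.norm_eq_abs, abs_inv, abs_of_pos (lt_of_lt_of_le hb hω)]
    exact inv_anti₀ hb hω
  have hfg_int : Integrable (f * g) μ :=
    hg_int.bdd_mul (hf_meas.mono hm).aestronglyMeasurable hf_bdd
  -- rewrite the integrand as f * g
  have h_eq : (fun ω => (T.indicator (fun _ => (1 : ℝ)) ω / W ω) * Y ω) = f * g := by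
    funext ω
    by_cases hωT : ω ∈ T
    · simp [hf, hg, Set.indicator_of_mem hωT, hcons ω hωT, div_eq_inv_mul, mul_assoc,
        mul_comm]
    · simp [hf, hg, Set.indicator_of_notMem hωT]
  rw [h_eq]
  have h1 : ∫ ω, (f * g) ω ∂μ = ∫ ω, (μ[f * g | m]) ω ∂μ := (integral_condExp hm).symm
  have h2 : μ[f * g | m] =ᵐ[μ] f * μ[g | m] :=
    condExp_mul_of_stronglyMeasurable_left hf_meas hfg_int hg_int
  have h3 : (f * μ[g | m] : Ω → ℝ) =ᵐ[μ] μ[Ya | m] := by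
    filter_upwards [hig, hpos] with ω h1' h2'
    have hWpos : W ω ≠ 0 := (lt_of_lt_of_le hb h2').ne'
    simp only [Pi.mul_apply, hf]
    rw [h1']
    field_simp
  calc ∫ ω, (f * g) ω ∂μ = ∫ ω, (μ[f * g | m]) ω ∂μ := h1
    _ = ∫ ω, (μ[Ya | m]) ω ∂μ := integral_congr_ae (h2.trans h3)
    _ = ∫ ω, Ya ω ∂μ := integral_condExp hm
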